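/- Let J: (a, ρ) ↦ (s_{11}(a,ρ), s_{12}(a,ρ)) be the map defined on {(a,ρ) : a > 0, |ρ| < 1, (a,ρ) ≠ (1,0)} by taking s_{11} and s_{12} to be the (1,1) and (1,2) entries of V_0^{1/2} / trace(V_0^{1/2}), where V_0 is the 2×2 matrix with rows (a, ρ) and (ρ, 1/a) and V_0^{1/2} is its positive definite square root. Then J is differentiable at every point of its domain and the determinant of its total derivative (Jacobian determinant) at (a, ρ) equals a √(1−ρ²) / ( (a² + 1) √(1−ρ²) + 2a(1−ρ²) )². In particular the Jacobian determinant is strictly positive, so the derivative of J is invertible everywhere on the domain. -/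

import Mathlib

open Real Topology

/-- The map J : (a, ρ) ↦ (s₁₁(a,ρ), s₁₂(a,ρ)) giving the (1,1) and (1,2) entries of
V₀^{1/2}/trace(V₀^{1/2}) for V₀ = [[a,ρ],[ρ,1/a]], written out explicitly: with
q = 4a²ρ² + (a²−1)², k = a²+1+√q, m = a²+1−√q,
s₁₁ = [√k(4a²ρ² + √q(a²−1) + (a²−1)²) + √m(4a²ρ² − √q(a²−1) + (a²−1)²)]/(2q(√m+√k)),
s₁₂ = aρ(√k−√m)²/(2q). -/
noncomputable def Jmap : ℝ × ℝ → ℝ × ℝ := fun z =>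
  let a := z.1
  let ρ := z.2
  let q := 4 * a ^ 2 * ρ ^ 2 + (a ^ 2 - 1) ^ 2
  let k := a ^ 2 + 1 + Real.sqrt q
  let m := a ^ 2 + 1 - Real.sqrt q
  ((Real.sqrt k * (4 * a ^ 2 * ρ ^ 2 + Real.sqrt q * (a ^ 2 - 1) + (a ^ 2 - 1) ^ 2)
      + Real.sqrt m * (4 * a ^ 2 * ρ ^ 2 - Real.sqrt q * (a ^ 2 - 1) + (a ^ 2 - 1) ^ 2))
    / (2 * q * (Real.sqrt m + Real.sqrt k)),
   a * ρ * (Real.sqrt k - Real.sqrt m) ^ 2 / (2 * q))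

/-!
Since det V₀ = 1 − ρ², the Cayley–Hamilton theorem gives
V₀^{1/2} = (V₀ + √(1−ρ²) I) / √(tr V₀ + 2√(1−ρ²)), so off the point (1, 0) the explicit formula
for J agrees with the rational expression (a(a + u), aρ) / (a² + 1 + 2au) in a and u = √(1 − ρ²).
This closed form is differentiable, and its Jacobian determinant a / (u (a² + 1 + 2au)²) is
computed from its two partial derivatives.
-/

theorem LinearMap.det_prod_eq {R : Type*} [CommRing R] (f : R × R →ₗ[R] R × R) :
    LinearMap.det f = (f (1, 0)).1 * (f (0, 1)).2 - (f (0, 1)).1 * (f (1, 0)).2 := by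
  rw [← LinearMap.det_toMatrix (Module.Basis.finTwoProd R), Matrix.det_fin_two]
  simp [LinearMap.toMatrix_apply]

section PartialDerivatives

variable {𝕜 E : Type*} [NontriviallyNormedField 𝕜] [NormedAddCommGroup E] [NormedSpace 𝕜 E]
  {f : 𝕜 × 𝕜 → E} {a b : 𝕜} {f' : E}

theorem fderiv_apply_one_zero (hf : DifferentiableAt 𝕜 f (a, b))
    (h : HasDerivAt (fun t ↦ f (t, b)) f' a) : fderiv 𝕜 f (a, b) (1, 0) = f' :=
  (hf.hasFDerivAt.comp_hasDerivAt a ((hasDerivAt_id' a).prodMk (hasDerivAt_const a b))).unique h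

theorem fderiv_apply_zero_one (hf : DifferentiableAt 𝕜 f (a, b))
    (h : HasDerivAt (fun t ↦ f (a, t)) f' b) : fderiv 𝕜 f (a, b) (0, 1) = f' :=
  (hf.hasFDerivAt.comp_hasDerivAt b ((hasDerivAt_const b a).prodMk (hasDerivAt_id' b))).unique h

end PartialDerivatives

section SqrtDenesting

variable {p s : ℝ}

theorem sqrt_add_mul_sqrt_sub (h : |s| ≤ p) : √(p + s) * √(p - s) = √(p ^ 2 - s ^ 2) := by
  rw [← sqrt_mul (by linarith [neg_abs_le s])]
  ring_nf

theorem sqrt_add_add_sqrt_sub_sq (h : |s| ≤ p) :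
    (√(p + s) + √(p - s)) ^ 2 = 2 * (p + √(p ^ 2 - s ^ 2)) := by
  linear_combination sq_sqrt (show 0 ≤ p + s by linarith [neg_abs_le s])
    + sq_sqrt (show 0 ≤ p - s by linarith [le_abs_self s]) + 2 * sqrt_add_mul_sqrt_sub h

theorem sqrt_add_sub_sqrt_sub_sq (h : |s| ≤ p) :
    (√(p + s) - √(p - s)) ^ 2 = 2 * (p - √(p ^ 2 - s ^ 2)) := by
  linear_combination sq_sqrt (show 0 ≤ p + s by linarith [neg_abs_le s])
    + sq_sqrt (show 0 ≤ p - s by linarith [le_abs_self s]) - 2 * sqrt_add_mul_sqrt_sub h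

end SqrtDenesting

namespace Jmap

noncomputable def denom (a ρ : ℝ) : ℝ := a ^ 2 + 1 + 2 * a * √(1 - ρ ^ 2)

noncomputable def closedForm (z : ℝ × ℝ) : ℝ × ℝ :=
  (z.1 * (z.1 + √(1 - z.2 ^ 2)) / denom z.1 z.2, z.1 * z.2 / denom z.1 z.2)

theorem denom_pos {a : ℝ} (ha : 0 ≤ a) (ρ : ℝ) : 0 < denom a ρ := by
  unfold denom; positivity

theorem discr_pos {a ρ : ℝ} (ha : 0 < a) (hne : (a, ρ) ≠ (1, 0)) :
    0 < 4 * a ^ 2 * ρ ^ 2 + (a ^ 2 - 1) ^ 2 := by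
  by_contra! h
  have hρ : a * ρ = 0 := pow_eq_zero_iff two_ne_zero |>.mp (by nlinarith [sq_nonneg (a ^ 2 - 1)])
  have ha1 : (a - 1) * (a + 1) = 0 :=
    pow_eq_zero_iff two_ne_zero |>.mp (by nlinarith [sq_nonneg (a * ρ)])
  apply hne
  rw [mul_eq_zero_iff_left ha.ne'] at hρ
  rw [mul_eq_zero_iff_right (by linarith), sub_eq_zero] at ha1
  rw [ha1, hρ]

theorem sqrt_add_sqrt_discr_sq {a ρ : ℝ} (ha : 0 ≤ a) (hρ : ρ ^ 2 ≤ 1) :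
    (√(a ^ 2 + 1 + √(4 * a ^ 2 * ρ ^ 2 + (a ^ 2 - 1) ^ 2))
        + √(a ^ 2 + 1 - √(4 * a ^ 2 * ρ ^ 2 + (a ^ 2 - 1) ^ 2))) ^ 2 = 2 * denom a ρ ∧
    (√(a ^ 2 + 1 + √(4 * a ^ 2 * ρ ^ 2 + (a ^ 2 - 1) ^ 2))
        - √(a ^ 2 + 1 - √(4 * a ^ 2 * ρ ^ 2 + (a ^ 2 - 1) ^ 2))) ^ 2
      = 2 * (a ^ 2 + 1 - 2 * a * √(1 - ρ ^ 2)) := by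
  set q := 4 * a ^ 2 * ρ ^ 2 + (a ^ 2 - 1) ^ 2
  have hu2 : √(1 - ρ ^ 2) ^ 2 = 1 - ρ ^ 2 := sq_sqrt (by linarith)
  have hs2 : √q ^ 2 = q := sq_sqrt (by positivity)
  -- k m = (a² + 1)² − q = 4a²(1 − ρ²)
  have hroot : √((a ^ 2 + 1) ^ 2 - √q ^ 2) = 2 * a * √(1 - ρ ^ 2) := by
    rw [hs2, show (a ^ 2 + 1) ^ 2 - q = (2 * a * √(1 - ρ ^ 2)) ^ 2 by
      linear_combination -4 * a ^ 2 * hu2, sqrt_sq (by positivity)]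
  have hs_abs : |√q| ≤ a ^ 2 + 1 := by
    rw [abs_of_nonneg (sqrt_nonneg q)]
    nlinarith [sqrt_nonneg q, mul_le_mul_of_nonneg_left hρ (sq_nonneg a)]
  rw [sqrt_add_add_sqrt_sub_sq hs_abs, sqrt_add_sub_sqrt_sub_sq hs_abs, hroot, denom]
  exact ⟨by ring, rfl⟩

theorem apply_eq_closedForm {a ρ : ℝ} (ha : 0 < a) (hρ : ρ ^ 2 < 1) (hne : (a, ρ) ≠ (1, 0)) :
    Jmap (a, ρ) = closedForm (a, ρ) := by
  have hq := discr_pos ha hne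
  have hD := denom_pos ha.le ρ
  have hu2 : √(1 - ρ ^ 2) ^ 2 = 1 - ρ ^ 2 := sq_sqrt (by linarith)
  have hq_factor : 4 * a ^ 2 * ρ ^ 2 + (a ^ 2 - 1) ^ 2
      = denom a ρ * (a ^ 2 + 1 - 2 * a * √(1 - ρ ^ 2)) := by
    unfold denom; linear_combination 4 * a ^ 2 * hu2
  obtain ⟨hsum, hdiff⟩ := sqrt_add_sqrt_discr_sq ha.le hρ.le
  simp only [Jmap, closedForm]
  set q := 4 * a ^ 2 * ρ ^ 2 + (a ^ 2 - 1) ^ 2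
  set u := √(1 - ρ ^ 2)
  set D := denom a ρ
  have hs2 : √q ^ 2 = q := sq_sqrt hq.le
  have hs_le : √q ≤ a ^ 2 + 1 := by nlinarith [sqrt_nonneg q]
  set x := √(a ^ 2 + 1 + √q)
  set y := √(a ^ 2 + 1 - √q)
  have hx2 : x ^ 2 = a ^ 2 + 1 + √q := sq_sqrt (by linarith [sqrt_nonneg q])
  have hy2 : y ^ 2 = a ^ 2 + 1 - √q := sq_sqrt (by linarith)
  have hxy : 0 < x + y := by
    nlinarith [sqrt_nonneg (a ^ 2 + 1 + √q), sqrt_nonneg (a ^ 2 + 1 - √q)]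
  have hD' : 0 < a ^ 2 + 1 - 2 * a * u := pos_of_mul_pos_right (hq_factor ▸ hq) hD.le
  have hN : (x * (4 * a ^ 2 * ρ ^ 2 + √q * (a ^ 2 - 1) + (a ^ 2 - 1) ^ 2) +
        y * (4 * a ^ 2 * ρ ^ 2 - √q * (a ^ 2 - 1) + (a ^ 2 - 1) ^ 2)) * (x + y)
      = 2 * q * (D + a ^ 2 - 1) := by
    linear_combination q * hsum + (a ^ 2 - 1) * √q * (hx2 - hy2) + 2 * (a ^ 2 - 1) * hs2
  ext
  · dsimp only
    rw [div_eq_div_iff (by positivity) hD.ne', ← mul_left_inj' hxy.ne']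
    simp only [D, denom] at hN hsum ⊢
    linear_combination (a ^ 2 + 1 + 2 * a * u) * hN - 2 * q * a * (a + u) * hsum
  · rw [hdiff, hq_factor, div_eq_div_iff (by positivity) hD.ne']
    ring

theorem eventuallyEq_closedForm {a ρ : ℝ} (ha : 0 < a) (hρ : ρ ^ 2 < 1) (hne : (a, ρ) ≠ (1, 0)) :
    Jmap =ᶠ[𝓝 (a, ρ)] closedForm := by
  have hopen : IsOpen {z : ℝ × ℝ | 0 < z.1 ∧ z.2 ^ 2 < 1 ∧ z ≠ (1, 0)} :=
    (isOpen_lt continuous_const continuous_fst).inter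
      ((isOpen_lt (continuous_snd.pow 2) continuous_const).inter isOpen_ne)
  filter_upwards [hopen.mem_nhds ⟨ha, hρ, hne⟩] with ⟨b, σ⟩ ⟨hb, hσ, hbσ⟩
  exact apply_eq_closedForm hb hσ hbσ

theorem differentiableAt_closedForm {a ρ : ℝ} (hρ : ρ ^ 2 < 1) (hD : denom a ρ ≠ 0) :
    DifferentiableAt ℝ closedForm (a, ρ) := by
  have h1 : 1 - ρ ^ 2 ≠ 0 := by linarith
  unfold closedForm denom at *
  fun_prop (disch := assumption)

theorem hasDerivAt_closedForm_fst {a ρ : ℝ} (hD : denom a ρ ≠ 0) :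
    HasDerivAt (fun t ↦ closedForm (t, ρ))
      ((2 * a + (a ^ 2 + 1) * √(1 - ρ ^ 2)) / denom a ρ ^ 2,
        ρ * (1 - a ^ 2) / denom a ρ ^ 2) a := by
  have hden : HasDerivAt (fun t ↦ denom t ρ) (2 * a + 2 * √(1 - ρ ^ 2)) a :=
    ((((hasDerivAt_id' a).pow 2).add_const 1).add
      (((hasDerivAt_id' a).const_mul 2).mul_const _)).congr_deriv (by ring)
  refine HasDerivAt.prodMk ?_ ?_
  · refine (((hasDerivAt_id' a).fun_mul ((hasDerivAt_id' a).add_const √(1 - ρ ^ 2))).fun_div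
      hden hD).congr_deriv ?_
    unfold denom at hD ⊢; field_simp; ring
  · refine (((hasDerivAt_id' a).mul_const ρ).fun_div hden hD).congr_deriv ?_
    unfold denom at hD ⊢; field_simp; ring

theorem hasDerivAt_closedForm_snd {a ρ : ℝ} (hρ : ρ ^ 2 < 1) (hD : denom a ρ ≠ 0) :
    HasDerivAt (fun t ↦ closedForm (a, t))
      (a * ρ * (a ^ 2 - 1) / (√(1 - ρ ^ 2) * denom a ρ ^ 2),
        a * (√(1 - ρ ^ 2) * denom a ρ + 2 * a * ρ ^ 2) / (√(1 - ρ ^ 2) * denom a ρ ^ 2)) ρ := by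
  have hu : 0 < √(1 - ρ ^ 2) := sqrt_pos.2 (by linarith)
  have hsqrt : HasDerivAt (fun t ↦ √(1 - t ^ 2)) (-ρ / √(1 - ρ ^ 2)) ρ :=
    (((hasDerivAt_pow 2 ρ).const_sub 1).sqrt (by linarith)).congr_deriv (by field_simp; ring)
  have hden : HasDerivAt (fun t ↦ denom a t) (-2 * a * ρ / √(1 - ρ ^ 2)) ρ :=
    ((hsqrt.const_mul (2 * a)).const_add (a ^ 2 + 1)).congr_deriv (by ring)
  refine HasDerivAt.prodMk ?_ ?_
  · refine (((hsqrt.const_add a).const_mul a).fun_div hden hD).congr_deriv ?_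
    unfold denom at hD ⊢; field_simp; ring
  · refine (((hasDerivAt_id' ρ).const_mul a).fun_div hden hD).congr_deriv ?_
    field_simp; ring

theorem det_fderiv_closedForm {a ρ : ℝ} (ha : 0 < a) (hρ : ρ ^ 2 < 1) :
    LinearMap.det (fderiv ℝ closedForm (a, ρ) : ℝ × ℝ →ₗ[ℝ] ℝ × ℝ)
      = a / (√(1 - ρ ^ 2) * denom a ρ ^ 2) := by
  have hD := (denom_pos ha.le ρ).ne'
  have hf := differentiableAt_closedForm hρ hD
  have h₁ := fderiv_apply_one_zero hf (hasDerivAt_closedForm_fst hD)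
  have h₂ := fderiv_apply_zero_one hf (hasDerivAt_closedForm_snd hρ hD)
  have hu : 0 < √(1 - ρ ^ 2) := sqrt_pos.2 (by linarith)
  have hu2 : √(1 - ρ ^ 2) ^ 2 = 1 - ρ ^ 2 := sq_sqrt (by linarith)
  have hkey : (2 * a + (a ^ 2 + 1) * √(1 - ρ ^ 2)) * (√(1 - ρ ^ 2) * denom a ρ + 2 * a * ρ ^ 2)
      + ρ ^ 2 * (a ^ 2 - 1) ^ 2 = denom a ρ ^ 2 := by
    unfold denom
    linear_combination (a ^ 2 + 1) * (a ^ 2 + 1 + 2 * a * √(1 - ρ ^ 2)) * hu2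
  rw [LinearMap.det_prod_eq, ContinuousLinearMap.coe_coe, h₁, h₂]
  field_simp
  linear_combination hkey

end Jmap

open Jmap

/-- On the domain {(a,ρ) : a > 0, |ρ| < 1, (a,ρ) ≠ (1,0)}, the map J is
differentiable, its Jacobian determinant at (a,ρ) equals
a √(1−ρ²) / ((a²+1)√(1−ρ²) + 2a(1−ρ²))², and in particular this determinant is
strictly positive, so the derivative of J is invertible everywhere on the domain. -/
theorem Jmap_differentiable_jacobian
    (a ρ : ℝ) (ha : 0 < a) (hρ₁ : -1 < ρ) (hρ₂ : ρ < 1) (hne : (a, ρ) ≠ (1, 0)) :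
    DifferentiableAt ℝ Jmap (a, ρ) ∧
    LinearMap.det ((fderiv ℝ Jmap (a, ρ) : ℝ × ℝ →L[ℝ] ℝ × ℝ) : ℝ × ℝ →ₗ[ℝ] ℝ × ℝ)
      = a * Real.sqrt (1 - ρ ^ 2)
        / ((a ^ 2 + 1) * Real.sqrt (1 - ρ ^ 2) + 2 * a * (1 - ρ ^ 2)) ^ 2 ∧
    0 < LinearMap.det ((fderiv ℝ Jmap (a, ρ) : ℝ × ℝ →L[ℝ] ℝ × ℝ) : ℝ × ℝ →ₗ[ℝ] ℝ × ℝ) := by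
  have hρ : ρ ^ 2 < 1 := by nlinarith
  have hD := denom_pos ha.le ρ
  have hu : 0 < √(1 - ρ ^ 2) := sqrt_pos.2 (by linarith)
  have hloc := eventuallyEq_closedForm ha hρ hne
  have hdet : LinearMap.det (fderiv ℝ Jmap (a, ρ) : ℝ × ℝ →ₗ[ℝ] ℝ × ℝ)
      = a / (√(1 - ρ ^ 2) * denom a ρ ^ 2) := by
    rw [hloc.fderiv_eq, det_fderiv_closedForm ha hρ]
  have hformula : a / (√(1 - ρ ^ 2) * denom a ρ ^ 2)
      = a * √(1 - ρ ^ 2) / ((a ^ 2 + 1) * √(1 - ρ ^ 2) + 2 * a * (1 - ρ ^ 2)) ^ 2 := by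
    have hbase : (a ^ 2 + 1) * √(1 - ρ ^ 2) + 2 * a * (1 - ρ ^ 2) = √(1 - ρ ^ 2) * denom a ρ := by
      rw [denom]; linear_combination (-2 * a) * sq_sqrt (show 0 ≤ 1 - ρ ^ 2 by linarith)
    rw [hbase]
    field_simp
  refine ⟨(differentiableAt_closedForm hρ hD.ne').congr_of_eventuallyEq hloc,
    hdet.trans hformula, ?_⟩
  rw [hdet]
  exact div_pos ha (mul_pos hu (pow_pos hD 2))
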